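/- arXiv:math/0608642 — 7 statements merged into one kernel-verified Lean document; each statement's English description precedes it below -/
import Mathlib

section
/- Suppose κ is an infinite cardinal with κ^{<κ} = κ and P is a strongly κ-dense partial order. Then P contains a subset Q of cardinality κ such that Q with the induced order is strongly κ-dense. -/
open Cardinal Set

universe u

/-- A partial order is strongly κ-dense if for all subsets `S`, `T` of size `< κ`
with `S < T` there is an element strictly between them. -/
def StronglyDense (κ : Cardinal.{u}) (P : Type u) [Preorder P] : Prop :=
  ∀ S T : Set P, #S < κ → #T < κ → (∀ s ∈ S, ∀ t ∈ T, s < t) →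
    ∃ x : P, (∀ s ∈ S, s < x) ∧ (∀ t ∈ T, x < t)

/-- A partial order is weakly κ-scattered if no suborder is strongly κ-dense. -/
def WeaklyScattered (κ : Cardinal.{u}) (P : Type u) [Preorder P] : Prop :=
  ∀ A : Set P, ¬ StronglyDense κ ↥A

/-- An order is weakly κ-dense if it has at least two elements and every open
interval `(s, t)` with `s < t` has cardinality at least `κ`. -/
def WeaklyDense (κ : Cardinal.{u}) (P : Type u) [Preorder P] : Prop :=
  2 ≤ #P ∧ ∀ s t : P, s < t → κ ≤ #{x : P | s < x ∧ x < t}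

/-- An order is strongly κ-scattered if no suborder is weakly κ-dense. -/
def StronglyScattered (κ : Cardinal.{u}) (P : Type u) [Preorder P] : Prop :=
  ∀ A : Set P, ¬ WeaklyDense κ ↥A

/-- An order is κ-well-founded if it has no strictly decreasing sequence of length κ. -/
def KappaWellFounded (κ : Cardinal.{u}) (P : Type u) [Preorder P] : Prop :=
  ¬ ∃ f : κ.ord.ToType → P, StrictAnti f

/-!
A strongly κ-dense order has at least κ elements (apply density to `S = P`, `T = ∅`), so it
suffices to find a subset of size at most κ that contains a chosen witness `w S T` strictly
between `S` and `T` for every pair of its subsets of size `< κ`. Such a subset is the union of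
κ stages, each made of the witnesses for small subsets of the earlier stages: `κ^{<κ} = κ` keeps
every stage of size at most κ, and the regularity of κ, which also follows from `κ^{<κ} = κ`,
puts every small subset of the union inside the union of the earlier stages.
-/

namespace Cardinal

theorem isRegular_of_powerlt_eq_self {κ : Cardinal.{u}} (hκ : ℵ₀ ≤ κ) (hpow : κ ^< κ = κ) :
    κ.IsRegular := by
  refine ⟨hκ, le_of_not_gt fun hcof => ?_⟩
  exact (lt_power_cof_ord hκ).not_ge ((le_powerlt κ hcof).trans_eq hpow)

theorem exists_mk_Iio_ord_toType_eq {κ c : Cardinal.{u}} (h : c < κ) :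
    ∃ i : κ.ord.ToType, #(Iio i) = c := by
  have : IsWellOrder κ.ord.ToType (· < ·) := isWellOrder_lt
  let i : κ.ord.ToType := Ordinal.ToType.mk ⟨c.ord, ord_lt_ord.2 h⟩
  have hi := Ordinal.card_typein (r := (· < ·)) i
  rw [← Ordinal.ToType.mk_symm_apply_coe] at hi
  simp only [i, RelIso.symm_apply_apply, card_ord] at hi
  exact ⟨i, hi.symm⟩

theorem IsRegular.exists_forall_lt_of_mk_lt {κ : Cardinal.{u}} (hκ : κ.IsRegular)
    {s : Set κ.ord.ToType} (hs : #s < κ) : ∃ i, ∀ j ∈ s, j < i := by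
  have := Cardinal.noMaxOrder hκ.aleph0_le
  have hs : ¬ IsCofinal s := fun h =>
    (Order.cof_le h).not_gt (by rwa [Ordinal.cof_toType, hκ.cof_ord])
  obtain ⟨i, hi⟩ := not_isCofinal_iff_bddAbove.1 hs
  obtain ⟨k, hk⟩ := exists_gt i
  exact ⟨k, fun j hj => (hi hj).trans_lt hk⟩

theorem IsRegular.exists_subset_iUnion_Iio {κ : Cardinal.{u}} (hκ : κ.IsRegular) {α : Type u}
    {f : κ.ord.ToType → Set α} {s : Set α} (hsf : s ⊆ ⋃ i, f i) (hs : #s < κ) :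
    ∃ i, s ⊆ ⋃ j : Iio i, f j.1 := by
  have hidx (x : s) : ∃ i, (x : α) ∈ f i := mem_iUnion.1 (hsf x.2)
  choose idx hidx using hidx
  obtain ⟨i, hi⟩ := hκ.exists_forall_lt_of_mk_lt (mk_range_le.trans_lt hs)
  exact ⟨i, fun x hx => mem_iUnion.2 ⟨⟨idx ⟨x, hx⟩, hi _ (mem_range_self _)⟩, hidx _⟩⟩

theorem mk_iUnion_le_of_forall_le {ι α : Type u} {κ : Cardinal.{u}} (hκ : ℵ₀ ≤ κ)
    {f : ι → Set α} (hι : #ι ≤ κ) (hf : ∀ i, #(f i) ≤ κ) : #(⋃ i, f i) ≤ κ :=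
  (mk_iUnion_le f).trans <| (mul_le_mul' hι (ciSup_le' hf)).trans_eq (mul_eq_self hκ)

end Cardinal

section SmallClosure

variable {α : Type u}

def smallSubsets (κ : Cardinal.{u}) (U : Set α) : Set (Set α) :=
  {S | S ⊆ U ∧ #S < κ}

theorem mk_smallSubsets_le {κ : Cardinal.{u}} (hκ : ℵ₀ ≤ κ) (hpow : κ ^< κ = κ) {U : Set α}
    (hU : #U ≤ κ) : #(smallSubsets κ U) ≤ κ := by
  have hcover : smallSubsets κ U ⊆ ⋃ i : κ.ord.ToType, {S | S ⊆ U ∧ #S ≤ #(Iio i)} := by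
    rintro S ⟨hSU, hS⟩
    obtain ⟨i, hi⟩ := exists_mk_Iio_ord_toType_eq hS
    exact mem_iUnion.2 ⟨i, hSU, hi.ge⟩
  refine (mk_le_mk_of_subset hcover).trans <|
    mk_iUnion_le_of_forall_le hκ (mk_ord_toType κ).le fun i => ?_
  calc #{S | S ⊆ U ∧ #S ≤ #(Iio i)} ≤ max #U ℵ₀ ^ #(Iio i) := mk_bounded_subset_le U _
    _ ≤ κ ^ #(Iio i) := power_le_power_right (max_le hU hκ)
    _ ≤ κ := (le_powerlt κ ((mk_Iio_lt i (by simp)).trans_eq (mk_ord_toType κ))).trans_eq hpow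

variable (κ : Cardinal.{u}) (w : Set α → Set α → α)

noncomputable def smallClosureStage : κ.ord.ToType → Set α :=
  wellFounded_lt.fix fun i stage =>
    image2 w (smallSubsets κ (⋃ j : Iio i, stage j j.2))
      (smallSubsets κ (⋃ j : Iio i, stage j j.2))

theorem smallClosureStage_eq (i : κ.ord.ToType) :
    smallClosureStage κ w i =
      image2 w (smallSubsets κ (⋃ j : Iio i, smallClosureStage κ w j))
        (smallSubsets κ (⋃ j : Iio i, smallClosureStage κ w j)) :=
  wellFounded_lt.fix_eq _ i

variable {κ}

theorem mk_smallClosureStage_le (hκ : ℵ₀ ≤ κ) (hpow : κ ^< κ = κ) (i : κ.ord.ToType) :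
    #(smallClosureStage κ w i) ≤ κ := by
  induction i using WellFoundedLT.induction with
  | ind i ih =>
    have hU : #(⋃ j : Iio i, smallClosureStage κ w j) ≤ κ :=
      mk_iUnion_le_of_forall_le hκ ((mk_Iio_lt i (by simp)).trans_eq (mk_ord_toType κ)).le
        fun j => ih j j.2
    have hsmall := mk_smallSubsets_le hκ hpow hU
    rw [smallClosureStage_eq]
    exact mk_image2_le.trans ((mul_le_mul' hsmall hsmall).trans_eq (mul_eq_self hκ))

theorem exists_mk_le_image2_smallSubsets_subset (hκ : κ.IsRegular) (hpow : κ ^< κ = κ) :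
    ∃ Q : Set α, #Q ≤ κ ∧ image2 w (smallSubsets κ Q) (smallSubsets κ Q) ⊆ Q := by
  refine ⟨⋃ i, smallClosureStage κ w i,
    mk_iUnion_le_of_forall_le hκ.aleph0_le (mk_ord_toType κ).le
      (mk_smallClosureStage_le w hκ.aleph0_le hpow), ?_⟩
  rintro _ ⟨S, ⟨hSQ, hS⟩, T, ⟨hTQ, hT⟩, rfl⟩
  obtain ⟨i, hi⟩ := hκ.exists_subset_iUnion_Iio (union_subset hSQ hTQ)
    ((mk_union_le S T).trans_lt (add_lt_of_lt hκ.aleph0_le hS hT))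
  refine mem_iUnion.2 ⟨i, ?_⟩
  rw [smallClosureStage_eq]
  exact mem_image2_of_mem ⟨subset_union_left.trans hi, hS⟩ ⟨subset_union_right.trans hi, hT⟩

end SmallClosure

namespace StronglyDense

variable {κ : Cardinal.{u}} {P : Type u} [Preorder P]

theorem le_mk (hP : StronglyDense κ P) : κ ≤ #P := by
  by_contra! hPκ
  have hemp : #(∅ : Set P) < κ := by simpa using zero_le.trans_lt hPκ
  obtain ⟨x, hx, -⟩ := hP univ ∅ (by rwa [mk_univ]) hemp (by simp)
  exact lt_irrefl x (hx x (mem_univ x))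

theorem subtype_of_image2_subset {w : Set P → Set P → P}
    (hw : ∀ S T : Set P, #S < κ → #T < κ → (∀ s ∈ S, ∀ t ∈ T, s < t) →
      (∀ s ∈ S, s < w S T) ∧ (∀ t ∈ T, w S T < t))
    {Q : Set P} (hQ : image2 w (smallSubsets κ Q) (smallSubsets κ Q) ⊆ Q) :
    StronglyDense κ Q := by
  intro S T hS hT hST
  have hS' : #(Subtype.val '' S) < κ := mk_image_le.trans_lt hS
  have hT' : #(Subtype.val '' T) < κ := mk_image_le.trans_lt hT
  obtain ⟨hSw, hTw⟩ := hw _ _ hS' hT' (by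
    rintro _ ⟨s, hs, rfl⟩ _ ⟨t, ht, rfl⟩
    exact hST s hs t ht)
  refine ⟨⟨_, hQ (mem_image2_of_mem ⟨image_val_subset, hS'⟩ ⟨image_val_subset, hT'⟩)⟩,
    fun s hs => hSw _ (mem_image_of_mem _ hs), fun t ht => hTw _ (mem_image_of_mem _ ht)⟩

end StronglyDense

/-- If κ^{<κ} = κ and P is strongly κ-dense, then P has a strongly κ-dense
suborder of cardinality κ. -/
theorem stmt_2 {P : Type u} [PartialOrder P] (κ : Cardinal.{u}) (hκ : ℵ₀ ≤ κ)
    (hpow : κ ^< κ = κ) (hP : StronglyDense κ P) :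
    ∃ Q : Set P, #Q = κ ∧ StronglyDense κ ↥Q := by
  have hemp : #(∅ : Set P) < κ := by simpa using aleph0_pos.trans_le hκ
  obtain ⟨x, -⟩ := hP ∅ ∅ hemp hemp (by simp)
  have : Nonempty P := ⟨x⟩
  choose! w hw using hP
  obtain ⟨Q, hQκ, hQ⟩ :=
    exists_mk_le_image2_smallSubsets_subset w (isRegular_of_powerlt_eq_self hκ hpow) hpow
  have hQdense := StronglyDense.subtype_of_image2_subset hw hQ
  exact ⟨Q, hQκ.antisymm hQdense.le_mk, hQdense⟩
end

section
/- Let κ be a regular uncountable cardinal and let D be a partial order of cardinality κ which is the union of fewer than κ subsets D_i, each of which is weakly κ-scattered (in the induced order). Then D is weakly κ-scattered. -/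
open Cardinal Set

universe u

/-!
A strongly κ-dense suborder is exactly a set without a *gap*: a pair `S < T` of subsets of size
`< κ` with no element of the set strictly between them. So it suffices to find a gap in every
subset `B`. Well-order the index set and build gaps stage by stage: at stage `i` take a gap
`(Sᵢ, Tᵢ)` in the part of `B ∩ Dᵢ` lying strictly between the earlier `Sⱼ` and `Tⱼ`; it exists
because `Dᵢ` is weakly κ-scattered. By regularity `S = ⋃ Sᵢ` and `T = ⋃ Tᵢ` still have size `< κ`,
and `S < T` by comparing stages. An element of `B` between `S` and `T` lies in some `Dᵢ`, hence in
the part of `B ∩ Dᵢ` considered at stage `i`, and between `Sᵢ` and `Tᵢ`: impossible.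
-/
section Gap

variable {P Q : Type u} [Preorder P] [Preorder Q] {κ : Cardinal.{u}}

def strictBetween (S T : Set P) : Set P :=
  {x | (∀ s ∈ S, s < x) ∧ ∀ t ∈ T, x < t}

theorem strictBetween_anti {S S' T T' : Set P} (hS : S' ⊆ S) (hT : T' ⊆ T) :
    strictBetween S T ⊆ strictBetween S' T' :=
  fun _ hx => ⟨fun s hs => hx.1 s (hS hs), fun t ht => hx.2 t (hT ht)⟩

structure IsGap (κ : Cardinal.{u}) (B S T : Set P) : Prop where
  left_subset : S ⊆ B
  right_subset : T ⊆ B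
  card_left_lt : #S < κ
  card_right_lt : #T < κ
  lt : ∀ s ∈ S, ∀ t ∈ T, s < t
  notMem : ∀ x ∈ B, x ∉ strictBetween S T

theorem stronglyDense_iff_not_exists_isGap :
    StronglyDense κ P ↔ ¬ ∃ S T : Set P, IsGap κ univ S T := by
  constructor
  · rintro h ⟨S, T, hgap⟩
    obtain ⟨x, hx⟩ := h S T hgap.card_left_lt hgap.card_right_lt hgap.lt
    exact hgap.notMem x trivial hx
  · intro h S T hS hT hST
    by_contra hx
    exact h ⟨S, T, subset_univ S, subset_univ T, hS, hT, hST, fun x _ hx' => hx ⟨x, hx'⟩⟩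

theorem IsGap.image {B S T : Set P} (f : P ↪o Q) (h : IsGap κ B S T) :
    IsGap κ (f '' B) (f '' S) (f '' T) where
  left_subset := image_mono h.left_subset
  right_subset := image_mono h.right_subset
  card_left_lt := (mk_image_eq f.injective).trans_lt h.card_left_lt
  card_right_lt := (mk_image_eq f.injective).trans_lt h.card_right_lt
  lt := by
    rintro _ ⟨s, hs, rfl⟩ _ ⟨t, ht, rfl⟩
    exact f.lt_iff_lt.2 (h.lt s hs t ht)
  notMem := by
    rintro _ ⟨x, hx, rfl⟩ ⟨hS, hT⟩
    exact h.notMem x hx ⟨fun s hs => f.lt_iff_lt.1 (hS _ ⟨s, hs, rfl⟩),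
      fun t ht => f.lt_iff_lt.1 (hT _ ⟨t, ht, rfl⟩)⟩

theorem IsGap.preimage {B S T : Set Q} (f : P ↪o Q) (hB : B ⊆ range f) (h : IsGap κ B S T) :
    IsGap κ (f ⁻¹' B) (f ⁻¹' S) (f ⁻¹' T) where
  left_subset := preimage_mono h.left_subset
  right_subset := preimage_mono h.right_subset
  card_left_lt := (mk_preimage_of_injective_of_subset_range f S f.injective
    (h.left_subset.trans hB)).trans_lt h.card_left_lt
  card_right_lt := (mk_preimage_of_injective_of_subset_range f T f.injective
    (h.right_subset.trans hB)).trans_lt h.card_right_lt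
  lt s hs t ht := f.lt_iff_lt.1 (h.lt _ hs _ ht)
  notMem x hx := by
    rintro ⟨hS, hT⟩
    refine h.notMem (f x) hx ⟨fun s hs => ?_, fun t ht => ?_⟩
    · obtain ⟨s, rfl⟩ := hB (h.left_subset hs)
      exact f.lt_iff_lt.2 (hS s hs)
    · obtain ⟨t, rfl⟩ := hB (h.right_subset ht)
      exact f.lt_iff_lt.2 (hT t ht)

theorem weaklyScattered_iff_forall_exists_isGap :
    WeaklyScattered κ P ↔ ∀ B : Set P, ∃ S T, IsGap κ B S T := by
  constructor
  · intro h B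
    have hB := h B
    rw [stronglyDense_iff_not_exists_isGap, not_not] at hB
    obtain ⟨S, T, hgap⟩ := hB
    exact ⟨_, _, by simpa using hgap.image (OrderEmbedding.subtype (· ∈ B))⟩
  · intro h A hA
    obtain ⟨S, T, hgap⟩ := h A
    rw [stronglyDense_iff_not_exists_isGap] at hA
    exact hA ⟨_, _, by simpa using hgap.preimage (OrderEmbedding.subtype (· ∈ A)) (by simp)⟩

theorem WeaklyScattered.exists_isGap_of_subset {E B : Set P} (hE : WeaklyScattered κ E)
    (hB : B ⊆ E) : ∃ S T, IsGap κ B S T := by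
  obtain ⟨S, T, hgap⟩ := weaklyScattered_iff_forall_exists_isGap.1 hE (Subtype.val ⁻¹' B)
  exact ⟨_, _, by simpa [inter_eq_right.2 hB] using hgap.image (OrderEmbedding.subtype (· ∈ E))⟩

end Gap

section CumulativeRec

variable {ι α : Type*} [LinearOrder ι] [WellFoundedLT ι]

noncomputable def cumulativeRec (step : ι → Set α → Set α → Set α × Set α) :
    ι → Set α × Set α :=
  WellFoundedLT.fix fun i F => step i (⋃ j, ⋃ h : j < i, (F j h).1) (⋃ j, ⋃ h : j < i, (F j h).2)

theorem cumulativeRec_eq (step : ι → Set α → Set α → Set α × Set α) (i : ι) :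
    cumulativeRec step i =
      step i (⋃ j < i, (cumulativeRec step j).1) (⋃ j < i, (cumulativeRec step j).2) :=
  WellFoundedLT.fix_eq _ i

end CumulativeRec

theorem exists_isGap_of_subset_iUnion {P : Type u} [Preorder P] {κ : Cardinal.{u}}
    (hκ : κ.IsRegular) {ι : Type u} [LinearOrder ι] [WellFoundedLT ι] (hι : #ι < κ)
    {D : ι → Set P} (hD : ∀ i, WeaklyScattered κ (D i)) {B : Set P} (hB : B ⊆ ⋃ i, D i) :
    ∃ S T, IsGap κ B S T := by
  choose gapL gapR hgap using fun i (C : Set P) =>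
    (hD i).exists_isGap_of_subset (inter_subset_right : C ∩ D i ⊆ D i)
  set F := cumulativeRec fun i L R =>
    (gapL i (B ∩ strictBetween L R), gapR i (B ∩ strictBetween L R))
  have hF : ∀ i, IsGap κ (B ∩ strictBetween (⋃ j < i, (F j).1) (⋃ j < i, (F j).2) ∩ D i)
      (F i).1 (F i).2 := fun i => by
    rw [show F i = _ from cumulativeRec_eq _ i]
    exact hgap _ _
  refine ⟨⋃ i, (F i).1, ⋃ i, (F i).2,
    iUnion_subset fun i => (hF i).left_subset.trans (inter_subset_left.trans inter_subset_left),
    iUnion_subset fun i => (hF i).right_subset.trans (inter_subset_left.trans inter_subset_left),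
    (card_iUnion_lt_iff_forall_of_isRegular hκ hι).2 fun i => (hF i).card_left_lt,
    (card_iUnion_lt_iff_forall_of_isRegular hκ hι).2 fun i => (hF i).card_right_lt, ?_, ?_⟩
  · simp only [mem_iUnion]
    rintro s ⟨i, hs⟩ t ⟨j, ht⟩
    rcases lt_trichotomy i j with hij | rfl | hji
    · exact ((hF j).right_subset ht).1.2.1 s (mem_iUnion₂_of_mem hij hs)
    · exact (hF i).lt s hs t ht
    · exact ((hF i).left_subset hs).1.2.2 t (mem_iUnion₂_of_mem hji ht)
  · rintro x hxB hx
    obtain ⟨i, hxi⟩ := mem_iUnion.1 (hB hxB)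
    have earlier_subset (G : ι → Set P) : ⋃ j < i, G j ⊆ ⋃ j, G j :=
      iUnion₂_subset fun j _ => subset_iUnion G j
    have hx_stage : x ∈ B ∩ strictBetween (⋃ j < i, (F j).1) (⋃ j < i, (F j).2) ∩ D i :=
      ⟨⟨hxB, strictBetween_anti (earlier_subset _) (earlier_subset _) hx⟩, hxi⟩
    exact (hF i).notMem x hx_stage (strictBetween_anti (subset_iUnion _ i) (subset_iUnion _ i) hx)

theorem stmt_4_general {P : Type u} [PartialOrder P] (κ : Cardinal.{u}) (hκ : κ.IsRegular)
    {ι : Type u} (hι : #ι < κ) (D : ι → Set P)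
    (hcov : ⋃ i, D i = Set.univ) (hDi : ∀ i, WeaklyScattered κ ↥(D i)) :
    WeaklyScattered κ P := by
  obtain ⟨_, _⟩ := exists_wellFoundedLT ι
  exact weaklyScattered_iff_forall_exists_isGap.2 fun B =>
    exists_isGap_of_subset_iUnion hκ hι hDi (hcov ▸ subset_univ B)

/-- A partial order of size κ which is a union of fewer than κ weakly κ-scattered
suborders is weakly κ-scattered. -/
theorem stmt_4 {P : Type u} [PartialOrder P] (κ : Cardinal.{u}) (hκ : κ.IsRegular)
    (hunc : ℵ₀ < κ) (hcard : #P = κ) {ι : Type u} (hι : #ι < κ) (D : ι → Set P)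
    (hcov : ⋃ i, D i = Set.univ) (hDi : ∀ i, WeaklyScattered κ ↥(D i)) :
    WeaklyScattered κ P :=
  stmt_4_general κ hκ hι D hcov hDi
end

section
/- Let κ be a regular cardinal and λ = κ^{<κ}. If every augmentation of a partial order P is weakly κ-scattered, then P is weakly κ-scattered and has no antichain of size λ. -/
open Cardinal Set

universe u

section StronglyDense

variable {κ : Cardinal.{u}} {α β : Type u} [Preorder α] [Preorder β]

theorem StronglyDense.of_orderIso (h : StronglyDense κ α) (e : α ≃o β) : StronglyDense κ β := by
  intro S T hS hT hST
  obtain ⟨x, hxS, hxT⟩ := h (e ⁻¹' S) (e ⁻¹' T) ((mk_preimage_equiv e.toEquiv S).trans_lt hS)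
    ((mk_preimage_equiv e.toEquiv T).trans_lt hT) fun s hs t ht => e.lt_iff_lt.1 (hST _ hs _ ht)
  refine ⟨e x, fun s hs => ?_, fun t ht => ?_⟩
  · simpa using e.lt_iff_lt.2 (hxS (e.symm s) (by simpa using hs))
  · simpa using e.lt_iff_lt.2 (hxT (e.symm t) (by simpa using ht))

theorem StronglyDense.not_weaklyScattered (h : StronglyDense κ α) (f : α ↪o β) :
    ¬ WeaklyScattered κ β :=
  fun hβ => hβ (range f) (h.of_orderIso f.orderIso)

end StronglyDense

section Augment

variable {P L : Type u} [PartialOrder P] [PartialOrder L]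

def AugmentLE (e : L → P) (x y : P) : Prop :=
  x ≤ y ∨ ∃ u v, u < v ∧ x ≤ e u ∧ e v ≤ y

abbrev augment (e : L → P) (he : ∀ u v, e u ≤ e v → u = v) : PartialOrder P where
  le := AugmentLE e
  lt x y := AugmentLE e x y ∧ ¬ AugmentLE e y x
  lt_iff_le_not_ge _ _ := Iff.rfl
  le_refl x := Or.inl le_rfl
  le_trans := by
    rintro x y z (hxy | ⟨u, v, huv, hxu, hvy⟩) (hyz | ⟨u', v', huv', hyu', hvz⟩)
    · exact .inl (hxy.trans hyz)
    · exact .inr ⟨u', v', huv', hxy.trans hyu', hvz⟩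
    · exact .inr ⟨u, v, huv, hxu, hvy.trans hyz⟩
    · obtain rfl := he v u' (hvy.trans hyu')
      exact .inr ⟨u, v', huv.trans huv', hxu, hvz⟩
  le_antisymm := by
    rintro x y (hxy | ⟨u, v, huv, hxu, hvy⟩) (hyx | ⟨u', v', huv', hyu', hvx⟩)
    · exact le_antisymm hxy hyx
    · cases he v' u' (hvx.trans (hxy.trans hyu'))
      exact absurd huv' (lt_irrefl _)
    · cases he v u (hvy.trans (hyx.trans hxu))
      exact absurd huv (lt_irrefl _)
    · obtain rfl := he v u' (hvy.trans hyu')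
      obtain rfl := he v' u (hvx.trans hxu)
      exact absurd (huv.trans huv') (lt_irrefl _)

theorem augment_le_iff (e : L → P) (he : ∀ u v, e u ≤ e v → u = v) (u v : L) :
    (augment e he).le (e u) (e v) ↔ u ≤ v := by
  constructor
  · rintro (h | ⟨u', v', huv', hu, hv⟩)
    · exact (he u v h).le
    · obtain rfl := he u u' hu
      obtain rfl := he v' v hv
      exact huv'.le
  · intro huv
    obtain rfl | huv := huv.eq_or_lt
    · exact .inl le_rfl
    · exact .inr ⟨u, v, huv, le_rfl, le_rfl⟩

theorem StronglyDense.not_weaklyScattered_augment {κ : Cardinal.{u}} (h : StronglyDense κ L)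
    (e : L → P) (he : ∀ u v, e u ≤ e v → u = v) :
    ¬ @WeaklyScattered κ P (augment e he).toPreorder :=
  @StronglyDense.not_weaklyScattered κ L P _ (augment e he).toPreorder h
    (@OrderEmbedding.ofMapLEIff L P _ (augment e he).toPreorder e (augment_le_iff e he))

end Augment

section LexBool

variable {I : Type u} [LinearOrder I]

def withLastTrue (I : Type u) [LT I] : Set (Lex (I → Bool)) :=
  {x | ∃ i, x i = true ∧ ∀ j, i < j → x j = false}

theorem exists_withLastTrue_between_of_le {S T : Set (Lex (I → Bool))} {y : Lex (I → Bool)}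
    {δ : I} (hδ : ∀ f ∈ S ∪ T, ∀ j, δ ≤ j → f j = false) (hS : ∀ s ∈ S, s ≤ y)
    (hT : ∀ t ∈ T, y < t) :
    ∃ x ∈ withLastTrue I, (∀ s ∈ S, s < x) ∧ ∀ t ∈ T, x < t := by
  set x : Lex (I → Bool) := toLex fun j => if j < δ then y j else decide (j = δ)
  refine ⟨x, ⟨δ, by simp [x], fun j hj => by simp [x, hj.not_gt, hj.ne']⟩, fun s hs => ?_,
    fun t ht => ?_⟩
  · have hsδ : s δ = false := hδ s (.inl hs) δ le_rfl
    obtain rfl | ⟨k, hk, hlt⟩ := (hS s hs).eq_or_lt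
    · exact ⟨δ, fun j hj => by simp [x, hj], by simp [x, hsδ]⟩
    by_cases hkδ : k < δ
    · exact ⟨k, fun j hj => by simp [x, hj.trans hkδ, hk j hj], by simpa [x, hkδ]⟩
    · refine ⟨δ, fun j hj => ?_, by simp [x, hsδ]⟩
      simp [x, hj, hk j (hj.trans_le (not_lt.1 hkδ))]
  · obtain ⟨k, hk, hlt⟩ := hT t ht
    have hkδ : k < δ := not_le.1 fun hδk => by simp [Bool.lt_iff, hδ t (.inr ht) k hδk] at hlt
    exact ⟨k, fun j hj => by simp [x, hj.trans hkδ, hk j hj], by simpa [x, hkδ]⟩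

theorem mk_setOf_forall_gt_eq_false_le (i : I) :
    #{x : Lex (I → Bool) | ∀ j, i < j → x j = false} ≤ 2 ^ #(Iic i) := by
  calc #{x : Lex (I → Bool) | ∀ j, i < j → x j = false} ≤ #(Iic i → Bool) := by
        refine mk_le_of_injective (f := fun x j => x.1 j.1) fun x y h =>
          Subtype.ext <| funext fun j => ?_
        rcases le_or_gt j i with hj | hj
        exacts [congrFun h ⟨j, hj⟩, (x.2 j hj).trans (y.2 j hj).symm]
    _ = 2 ^ #(Iic i) := by simp

variable [WellFoundedLT I]

open scoped Classical in
noncomputable def lexInf (T : Set (Lex (I → Bool))) : Lex (I → Bool) :=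
  toLex <| wellFounded_lt.fix fun i ih =>
    decide (∀ t ∈ T, (∀ j (hj : j < i), t j = ih j hj) → t i = true)

theorem lexInf_eq_true_iff (T : Set (Lex (I → Bool))) (i : I) :
    lexInf T i = true ↔ ∀ t ∈ T, (∀ j < i, t j = lexInf T j) → t i = true := by
  classical
  exact (congrArg (· = true) (wellFounded_lt.fix_eq _ i)).to_iff.trans decide_eq_true_iff

theorem lexInf_le {T : Set (Lex (I → Bool))} {t : Lex (I → Bool)} (ht : t ∈ T) :
    lexInf T ≤ t := by
  refine not_lt.1 fun ⟨i, hagree, hlt⟩ => ?_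
  obtain ⟨hti, hMi⟩ := Bool.lt_iff.1 hlt
  simp [(lexInf_eq_true_iff T i).1 hMi t ht hagree] at hti

theorem le_lexInf {T : Set (Lex (I → Bool))} {c : Lex (I → Bool)} (h : ∀ t ∈ T, c ≤ t) :
    c ≤ lexInf T := by
  refine not_lt.1 fun ⟨i, hagree, hlt⟩ => ?_
  obtain ⟨hMi, hci⟩ := Bool.lt_iff.1 hlt
  rw [← Bool.not_eq_true, lexInf_eq_true_iff] at hMi
  push Not at hMi
  obtain ⟨t, ht, htM, hti⟩ := hMi
  exact (h t ht).not_gt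
    ⟨i, fun j hj => (htM j hj).trans (hagree j hj), Bool.lt_iff.2 ⟨by simpa using hti, hci⟩⟩

theorem exists_withLastTrue_between_of_lastTrue {S : Set (Lex (I → Bool))} {t₀ : Lex (I → Bool)}
    {γ δ : I} (hγ : t₀ γ = true) (hγ' : ∀ j, γ < j → t₀ j = false) (hγδ : γ < δ)
    (hδ : ∀ s ∈ S, ∀ j, δ ≤ j → s j = false) (hS : ∀ s ∈ S, s < t₀) :
    ∃ x ∈ withLastTrue I, (∀ s ∈ S, s < x) ∧ x < t₀ := by
  set x : Lex (I → Bool) := toLex fun j => if j < γ then t₀ j else decide (γ < j ∧ j ≤ δ)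
  refine ⟨x, ⟨δ, by simp [x, hγδ.not_gt, hγδ], fun j hj => ?_⟩, fun s hs => ?_,
    ⟨γ, fun j hj => by simp [x, hj], by simp [x, hγ]⟩⟩
  · simp [x, (hγδ.trans hj).not_gt, hj.not_ge]
  obtain ⟨k, hk, hlt⟩ := hS s hs
  obtain ⟨hsk, htk⟩ := Bool.lt_iff.1 hlt
  obtain hkγ | rfl : k < γ ∨ k = γ := (not_lt.1 fun h => by simp [hγ' k h] at htk).lt_or_eq
  · exact ⟨k, fun j hj => by simp [x, hj.trans hkγ, hk j hj], by simpa [x, hkγ]⟩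
  -- `s` and `x` agree with `t₀` below `k` and are `0` at `k`; after that `x` is `1` up to `δ`,
  -- where `s` has already vanished
  have hne : s ≠ x := fun h => by simpa [x, h, hγδ.not_gt, hγδ] using hδ s hs δ le_rfl
  refine lt_of_le_of_ne (not_lt.1 fun ⟨m, hm, hlt'⟩ => ?_) hne
  obtain ⟨hxm, hsm⟩ := Bool.lt_iff.1 hlt'
  rcases lt_trichotomy m k with hmk | rfl | hkm
  · simp [x, hmk, ← hk m hmk, hsm] at hxm
  · simp [hsk] at hsm
  · rcases le_or_gt m δ with hmδ | hδm
    · simp [x, hkm, hkm.not_gt, hmδ] at hxm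
    · simp [hδ s hs m hδm.le] at hsm

theorem exists_withLastTrue_between {S T : Set (Lex (I → Bool))} (hT : T ⊆ withLastTrue I)
    {δ : I} (hδ : ∀ f ∈ S ∪ T, ∀ j, δ ≤ j → f j = false) (hST : ∀ s ∈ S, ∀ t ∈ T, s < t) :
    ∃ x ∈ withLastTrue I, (∀ s ∈ S, s < x) ∧ ∀ t ∈ T, x < t := by
  by_cases hmin : lexInf T ∈ T
  · obtain ⟨γ, hγ, hγ'⟩ := hT hmin
    have hγδ : γ < δ := not_le.1 fun h => by simp [hδ _ (.inr hmin) γ h] at hγ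
    obtain ⟨x, hx, hSx, hxT⟩ := exists_withLastTrue_between_of_lastTrue hγ hγ' hγδ
      (fun s hs => hδ s (.inl hs)) fun s hs => hST s hs _ hmin
    exact ⟨x, hx, hSx, fun t ht => hxT.trans_le (lexInf_le ht)⟩
  · exact exists_withLastTrue_between_of_le hδ
      (fun s hs => le_lexInf fun t ht => (hST s hs t ht).le)
      fun t ht => (lexInf_le ht).lt_of_ne fun h => hmin (h ▸ ht)

theorem stronglyDense_withLastTrue : StronglyDense (Order.cof I) (withLastTrue I) := by
  intro S T hS hT hST
  choose last hlast using fun x : withLastTrue I => x.2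
  have hbound : ∀ A : Set (withLastTrue I), #A < Order.cof I → ∃ δ, ∀ a ∈ A, last a < δ :=
    fun A hA => by
      obtain ⟨δ, hδ⟩ := not_isCofinal_iff.1 fun h => ((Order.cof_le h).trans mk_image_le).not_gt hA
      exact ⟨δ, fun a ha => hδ _ (mem_image_of_mem last ha)⟩
  obtain ⟨δS, hδS⟩ := hbound S hS
  obtain ⟨δT, hδT⟩ := hbound T hT
  have hδ : ∀ f ∈ Subtype.val '' S ∪ Subtype.val '' T, ∀ j, max δS δT ≤ j → f j = false := by
    rintro _ (⟨f, hf, rfl⟩ | ⟨f, hf, rfl⟩) j hj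
    · exact (hlast f).2 j ((hδS f hf).trans_le ((le_max_left _ _).trans hj))
    · exact (hlast f).2 j ((hδT f hf).trans_le ((le_max_right _ _).trans hj))
  obtain ⟨x, hx, hSx, hxT⟩ := exists_withLastTrue_between (by rintro _ ⟨t, -, rfl⟩; exact t.2) hδ
    (by rintro _ ⟨s, hs, rfl⟩ _ ⟨t, ht, rfl⟩; exact hST s hs t ht)
  exact ⟨⟨x, hx⟩, fun s hs => hSx s ⟨s, hs, rfl⟩, fun t ht => hxT t ⟨t, ht, rfl⟩⟩

end LexBool

theorem mk_withLastTrue_le {κ : Cardinal.{u}} (hκ : ℵ₀ ≤ κ) :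
    #(withLastTrue κ.ord.ToType) ≤ κ ^< κ := by
  have hIic (i : κ.ord.ToType) : #(Iic i) < κ := by
    rw [← Iio_insert]
    exact mk_insert_le.trans_lt
      (add_lt_of_lt hκ (by simpa using mk_Iio_lt i) (one_lt_aleph0.trans_le hκ))
  have hpart (i : κ.ord.ToType) :
      #{x : Lex (κ.ord.ToType → Bool) | ∀ j, i < j → x j = false} ≤ κ ^< κ :=
    (mk_setOf_forall_gt_eq_false_le i).trans <|
      (power_le_power_right (by exact_mod_cast (natCast_lt_aleph0 (n := 2)).le.trans hκ)).trans
        (le_powerlt κ (hIic i))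
  have hκ_le : κ ≤ κ ^< κ := by
    simpa using le_powerlt κ (one_lt_aleph0.trans_le hκ)
  calc #(withLastTrue κ.ord.ToType)
      ≤ #(⋃ i, {x : Lex (κ.ord.ToType → Bool) | ∀ j, i < j → x j = false}) :=
        mk_le_mk_of_subset fun x ⟨i, _, hi⟩ => mem_iUnion.2 ⟨i, hi⟩
    _ ≤ #κ.ord.ToType * ⨆ i, #{x : Lex (κ.ord.ToType → Bool) | ∀ j, i < j → x j = false} :=
        mk_iUnion_le _
    _ ≤ κ * κ ^< κ := by
        rw [mk_ord_toType]
        exact mul_le_mul_right (ciSup_le' hpart) κ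
    _ = κ ^< κ := mul_eq_right (hκ.trans hκ_le) hκ_le (aleph0_pos.trans_le hκ).ne'

/-- If every augmentation of P is weakly κ-scattered, then P is weakly κ-scattered
and has no antichain of size λ = κ^{<κ}. -/
theorem stmt_10 {P : Type u} [inst : PartialOrder P] (κ : Cardinal.{u}) (hκ : κ.IsRegular)
    (haug : ∀ inst' : PartialOrder P, (∀ a b : P, a ≤ b → inst'.le a b) →
      @WeaklyScattered κ P inst'.toPreorder) :
    WeaklyScattered κ P ∧ ∀ A : Set P, IsAntichain (· ≤ ·) A → #A ≠ κ ^< κ := by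
  refine ⟨haug inst fun _ _ => id, fun A hA hcard => ?_⟩
  have hdense : StronglyDense κ (withLastTrue κ.ord.ToType) := by
    simpa [hκ.cof_ord] using stronglyDense_withLastTrue (I := κ.ord.ToType)
  obtain ⟨e⟩ : Nonempty (withLastTrue κ.ord.ToType ↪ A) :=
    (le_def _ _).1 ((mk_withLastTrue_le hκ.aleph0_le).trans hcard.ge)
  have he : ∀ u v, (e u : P) ≤ e v → u = v := fun u v h =>
    e.injective (Subtype.ext (hA.eq (e u).2 (e v).2 h))
  exact hdense.not_weaklyScattered_augment _ he (haug (augment _ he) fun _ _ => id)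
end

section
/- Let I be a weakly κ-scattered partial order and let (P_i)_{i ∈ I} be a family of weakly κ-scattered partial orders. Then the lexicographic sum of the P_i along I is weakly κ-scattered. -/
open Cardinal Set

universe u

/-!
If `A` is a strongly κ-dense subset of the lexicographic sum, either two comparable points of `A`
lie in one fibre `Q i`, or the first projection is strictly monotone on `A`. In the first case
the points of `A` strictly between them form a strongly κ-dense subset of `Q i` (κ is infinite,
so the two endpoints can be added to the sets to be separated); in the second the projection
of `A` is a strongly κ-dense subset of `I`, since a strictly monotone map that also reflects `<`
carries separating elements to separating elements.
-/

section StronglyDense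

variable {κ : Cardinal.{u}} {P R : Type u} [Preorder P] [Preorder R]

lemma stronglyDense_coe_iff {A : Set P} :
    StronglyDense κ ↥A ↔ ∀ S ⊆ A, ∀ T ⊆ A, #S < κ → #T < κ → (∀ s ∈ S, ∀ t ∈ T, s < t) →
      ∃ x ∈ A, (∀ s ∈ S, s < x) ∧ (∀ t ∈ T, x < t) := by
  constructor
  · intro h S hSA T hTA hS hT hST
    obtain ⟨x, hSx, hxT⟩ := h (Subtype.val ⁻¹' S) (Subtype.val ⁻¹' T)
      ((mk_preimage_of_injective _ _ Subtype.coe_injective).trans_lt hS)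
      ((mk_preimage_of_injective _ _ Subtype.coe_injective).trans_lt hT)
      (fun s hs t ht => hST s hs t ht)
    exact ⟨x, x.2, fun s hs => hSx ⟨s, hSA hs⟩ hs, fun t ht => hxT ⟨t, hTA ht⟩ ht⟩
  · intro h S T hS hT hST
    obtain ⟨x, hxA, hSx, hxT⟩ := h (Subtype.val '' S) (image_subset_iff.2 fun s _ => s.2)
      (Subtype.val '' T) (image_subset_iff.2 fun t _ => t.2)
      (mk_image_le.trans_lt hS) (mk_image_le.trans_lt hT)
      (by rintro _ ⟨s, hs, rfl⟩ _ ⟨t, ht, rfl⟩; exact hST s hs t ht)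
    exact ⟨⟨x, hxA⟩, fun s hs => hSx s (mem_image_of_mem _ hs),
      fun t ht => hxT t (mem_image_of_mem _ ht)⟩

lemma StronglyDense.inter_Ioo (hκ : ℵ₀ ≤ κ) {A : Set P} (hA : StronglyDense κ ↥A) {s t : P}
    (hs : s ∈ A) (ht : t ∈ A) (hst : s < t) : StronglyDense κ ↥(A ∩ Ioo s t) := by
  rw [stronglyDense_coe_iff] at hA ⊢
  have hcard : ∀ (S : Set P) (a : P), #S < κ → #(insert a S : Set P) < κ := fun S a hS =>
    mk_insert_le.trans_lt (add_lt_of_lt hκ hS (one_lt_aleph0.trans_le hκ))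
  intro S hS T hT hSκ hTκ hST
  obtain ⟨x, hxA, hSx, hxT⟩ := hA (insert s S) (insert_subset hs fun a ha => (hS ha).1)
    (insert t T) (insert_subset ht fun a ha => (hT ha).1) (hcard S s hSκ) (hcard T t hTκ) <| by
      rintro a (rfl | ha) b (rfl | hb)
      exacts [hst, (hT hb).2.1, (hS ha).2.2, hST a ha b hb]
  exact ⟨x, ⟨hxA, hSx s (mem_insert _ _), hxT t (mem_insert _ _)⟩,
    fun a ha => hSx a (mem_insert_of_mem _ ha), fun b hb => hxT b (mem_insert_of_mem _ hb)⟩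

lemma StronglyDense.preimage {B : Set P} (hB : StronglyDense κ ↥B) (f : R → P)
    (hf : ∀ a b, f a < f b ↔ a < b) (hBf : B ⊆ range f) : StronglyDense κ ↥(f ⁻¹' B) := by
  rw [stronglyDense_coe_iff] at hB ⊢
  intro S hS T hT hSκ hTκ hST
  obtain ⟨x, hxB, hSx, hxT⟩ := hB (f '' S) (image_subset_iff.2 hS) (f '' T)
    (image_subset_iff.2 hT) (mk_image_le.trans_lt hSκ) (mk_image_le.trans_lt hTκ)
    (by rintro _ ⟨a, ha, rfl⟩ _ ⟨b, hb, rfl⟩; exact (hf a b).2 (hST a ha b hb))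
  obtain ⟨y, rfl⟩ := hBf hxB
  exact ⟨y, hxB, fun a ha => (hf a y).1 (hSx _ (mem_image_of_mem f ha)),
    fun b hb => (hf y b).1 (hxT _ (mem_image_of_mem f hb))⟩

lemma StronglyDense.image {A : Set P} (hA : StronglyDense κ ↥A) (f : P → R)
    (hf : ∀ a ∈ A, ∀ b ∈ A, f a < f b ↔ a < b) : StronglyDense κ ↥(f '' A) := by
  rw [stronglyDense_coe_iff] at hA ⊢
  intro S' hS' T' hT' hSκ hTκ hST
  obtain ⟨S, hSA, hS⟩ := surjOn_iff_exists_bijOn_subset.1 hS'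
  obtain ⟨T, hTA, hT⟩ := surjOn_iff_exists_bijOn_subset.1 hT'
  obtain rfl := hS.image_eq
  obtain rfl := hT.image_eq
  rw [mk_image_eq_of_injOn f S hS.injOn] at hSκ
  rw [mk_image_eq_of_injOn f T hT.injOn] at hTκ
  obtain ⟨x, hxA, hSx, hxT⟩ := hA S hSA T hTA hSκ hTκ fun s hs t ht =>
    (hf s (hSA hs) t (hTA ht)).1 (hST _ (mem_image_of_mem f hs) _ (mem_image_of_mem f ht))
  exact ⟨f x, mem_image_of_mem f hxA,
    forall_mem_image.2 fun s hs => (hf s (hSA hs) x hxA).2 (hSx s hs),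
    forall_mem_image.2 fun t ht => (hf x hxA t (hTA ht)).2 (hxT t ht)⟩

end StronglyDense

namespace Sigma.Lex

variable {ι : Type u} {α : ι → Type u} [Preorder ι] [∀ i, Preorder (α i)]

lemma lt_of_fst_lt {p q : Σₗ i, α i} (h : (ofLex p).1 < (ofLex q).1) : p < q :=
  lt_def.2 (Or.inl h)

lemma toLex_mk_lt_toLex_mk_iff {i : ι} {a b : α i} :
    (toLex ⟨i, a⟩ : Σₗ i, α i) < toLex ⟨i, b⟩ ↔ a < b := by
  rw [lt_def]
  exact ⟨by rintro (h | ⟨_, h⟩); exacts [(lt_irrefl i h).elim, h], fun h => Or.inr ⟨rfl, h⟩⟩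

lemma Ioo_toLex_mk_subset_range (i : ι) (a b : α i) :
    Ioo (toLex ⟨i, a⟩ : Σₗ i, α i) (toLex ⟨i, b⟩) ⊆ range fun x : α i => toLex ⟨i, x⟩ := by
  rintro ⟨j, y⟩ ⟨hax, hxb⟩
  rcases lt_def.1 hax with hij | ⟨hij, -⟩
  · rcases lt_def.1 hxb with hji | ⟨hji, -⟩
    exacts [(lt_asymm hij hji).elim, (hij.trans_eq hji).false.elim]
  · subst hij
    exact ⟨y, rfl⟩

lemma exists_eq_toLex_mk_of_lt {p q : Σₗ i, α i} (h : p < q) (h' : ¬ (ofLex p).1 < (ofLex q).1) :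
    ∃ (i : ι) (a b : α i), p = toLex ⟨i, a⟩ ∧ q = toLex ⟨i, b⟩ := by
  obtain ⟨i, a⟩ := p
  obtain ⟨j, b⟩ := q
  obtain ⟨hij, -⟩ := (lt_def.1 h).resolve_left h'
  subst hij
  exact ⟨i, a, b, rfl, rfl⟩

end Sigma.Lex

/-- The lexicographic sum of weakly κ-scattered partial orders along a weakly
κ-scattered partial order is weakly κ-scattered. -/
theorem stmt_13 {I : Type u} [PartialOrder I] (Q : I → Type u) [∀ i, PartialOrder (Q i)]
    (κ : Cardinal.{u}) (hκ : κ.IsRegular)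
    (hI : WeaklyScattered κ I) (hQ : ∀ i, WeaklyScattered κ (Q i)) :
    WeaklyScattered κ (Σₗ i, Q i) := by
  intro A hA
  by_cases hfst : ∀ p ∈ A, ∀ q ∈ A, p < q → (ofLex p).1 < (ofLex q).1
  · exact hI _ <| hA.image (fun p => (ofLex p).1) fun p hp q hq =>
      ⟨Sigma.Lex.lt_of_fst_lt, hfst p hp q hq⟩
  · push Not at hfst
    obtain ⟨p, hp, q, hq, hpq, hfib⟩ := hfst
    obtain ⟨i, a, b, rfl, rfl⟩ := Sigma.Lex.exists_eq_toLex_mk_of_lt hpq hfib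
    exact hQ i _ <| (hA.inter_Ioo hκ.aleph0_le hp hq hpq).preimage _
      (fun _ _ => Sigma.Lex.toLex_mk_lt_toLex_mk_iff)
      (inter_subset_right.trans (Sigma.Lex.Ioo_toLex_mk_subset_range i a b))
end

section
/- Let I be a strongly κ-scattered linear order and let (P_i)_{i ∈ I} be a family of strongly κ-scattered linear orders. Then the lexicographic sum of the P_i along I is strongly κ-scattered. -/
open Cardinal Set

universe u

/-!
Let `A` be a weakly κ-dense suborder of `Σₗ i, Q i`. If two points of `A` lie in the same
fibre `i`, then the points of `A` in that fibre form a convex subset of `A` with at least two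
elements, hence a weakly κ-dense suborder of `Q i`. Otherwise the projection to `I` is injective,
hence strictly monotone on `A`, and its image is a weakly κ-dense suborder of `I`.
-/

theorem Sigma.Lex.monotone_fst {ι : Type*} {α : ι → Type*} [Preorder ι] [∀ i, Preorder (α i)] :
    Monotone fun a : Σₗ i, α i => (ofLex a).1 := by
  intro a b hab
  rcases Sigma.Lex.le_def.mp hab with h | ⟨h, -⟩
  exacts [h.le, h.le]

theorem Sigma.Lex.strictMono_toLex_mk {ι : Type*} {α : ι → Type*} [Preorder ι]
    [∀ i, Preorder (α i)] (i : ι) : StrictMono fun a : α i => toLex (⟨i, a⟩ : Sigma α) :=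
  fun _ _ h => Sigma.Lex.right _ _ h

section WeaklyDense

variable {κ : Cardinal.{u}} {P R : Type u} [Preorder P] [Preorder R]

theorem WeaklyDense.of_orderIso (h : WeaklyDense κ P) (e : P ≃o R) : WeaklyDense κ R := by
  refine ⟨(Cardinal.mk_congr e.toEquiv) ▸ h.1, fun s t hst => ?_⟩
  have hlt : e.symm s < e.symm t := e.symm.lt_iff_lt.mpr hst
  refine (h.2 _ _ hlt).trans_eq (Cardinal.mk_congr (e.toEquiv.subtypeEquiv fun x => ?_))
  simp [← e.lt_iff_lt]

theorem WeaklyDense.of_ordConnected (h : WeaklyDense κ P) {C : Set P} (hC : C.OrdConnected)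
    (h2 : 2 ≤ #C) : WeaklyDense κ C := by
  refine ⟨h2, fun s t hst => (h.2 s t hst).trans (Cardinal.mk_le_of_injective
    (f := fun x => ⟨⟨x, hC.out s.2 t.2 ⟨x.2.1.le, x.2.2.le⟩⟩, x.2⟩) fun x y hxy => ?_)⟩
  simpa [Subtype.ext_iff] using hxy

theorem WeaklyDense.of_orderEmbedding (h : WeaklyDense κ R) (f : P ↪o R)
    (hconv : (range f).OrdConnected) (h2 : 2 ≤ #(range f)) : WeaklyDense κ P :=
  (h.of_ordConnected hconv h2).of_orderIso (OrderEmbedding.orderIso (f := f)).symm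

theorem StronglyScattered.not_weaklyDense_of_orderEmbedding (hR : StronglyScattered κ R)
    (f : P ↪o R) : ¬ WeaklyDense κ P :=
  fun h => hR (range f) (h.of_orderIso OrderEmbedding.orderIso)

end WeaklyDense

theorem stmt_14_general {I : Type u} [LinearOrder I] (Q : I → Type u) [∀ i, LinearOrder (Q i)]
    (κ : Cardinal.{u})
    (hI : StronglyScattered κ I) (hQ : ∀ i, StronglyScattered κ (Q i)) :
    StronglyScattered κ (Σₗ i, Q i) := by
  intro A hA
  set π : A → I := fun x => (ofLex x.1).1
  have hπ : Monotone π := Sigma.Lex.monotone_fst.comp (Subtype.mono_coe _)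
  by_cases hinj : Function.Injective π
  · exact hI.not_weaklyDense_of_orderEmbedding
      (OrderEmbedding.ofStrictMono π (hπ.strictMono_of_injective hinj)) hA
  obtain ⟨s, t, hfib, hst⟩ : ∃ s t, π s = π t ∧ s ≠ t := by
    simpa [Function.Injective] using hinj
  set i := π s
  let fiber : Set (Q i) := {q | toLex ⟨i, q⟩ ∈ A}
  let f : fiber ↪o A := OrderEmbedding.ofStrictMono (fun q => ⟨toLex ⟨i, q⟩, q.2⟩)
    fun _ _ h => Sigma.Lex.strictMono_toLex_mk i h
  have hrange : range f = π ⁻¹' {i} := by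
    ext x
    constructor
    · rintro ⟨q, rfl⟩
      rfl
    · obtain ⟨⟨j, q⟩, hx⟩ := x
      rintro (rfl : j = i)
      exact ⟨⟨q, hx⟩, rfl⟩
  refine hQ i fiber (hA.of_orderEmbedding f ?_ ?_)
  · rw [hrange]
    exact ordConnected_singleton.preimage_mono hπ
  · rw [hrange, Cardinal.two_le_iff]
    exact ⟨⟨s, rfl⟩, ⟨t, hfib.symm⟩, fun h => hst (congrArg Subtype.val h)⟩

/-- The lexicographic sum of strongly κ-scattered linear orders along a strongly
κ-scattered linear order is strongly κ-scattered. -/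
theorem stmt_14 {I : Type u} [LinearOrder I] (Q : I → Type u) [∀ i, LinearOrder (Q i)]
    (κ : Cardinal.{u}) (hκ : κ.IsRegular)
    (hI : StronglyScattered κ I) (hQ : ∀ i, StronglyScattered κ (Q i)) :
    StronglyScattered κ (Σₗ i, Q i) :=
  stmt_14_general Q κ hI hQ
end

section
/- Let Q be a linear order, and define a ≡ b iff the closed interval between a and b, with the induced order, lies in a class K of linear orders that contains all orders of size < κ and is closed under suborders and lexicographic sums along well-orders of length < |Q|⁺ and their inverses. Then ≡ is an equivalence relation, and each equivalence class, with the induced order, lies in K; moreover if a < b are inequivalent then every element equivalent to a is below every element equivalent to b. -/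
/-!
For `a ≤ b ≤ c` the interval `[a, c]` is the two-term sum `[a, b] + (b, c]`, which gives
transitivity; convexity of classes (`[c, d] ⊆ [a, b]` and `a ≡ b` give `c ≡ d`) then orders
distinct classes. The class of `a` is the sum of its parts below and above `a`. The part above
`a`, well-ordered as `(b_i)_{i < #C}`, is the well-ordered sum of the blocks of elements first
dominated by `b_i`, each contained in `[a, b_i]`; the part below `a` is the inverse
well-ordered sum of the mirrored blocks.
-/

open Cardinal Set

universe u

/-- `a ≡ b` iff the closed interval between them belongs to the class `K`
(of subsets of `Q`, regarded as suborders). -/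
def IntervalEquiv {Q : Type u} [LinearOrder Q] (K : Set Q → Prop) (a b : Q) : Prop :=
  K (Set.Icc (min a b) (max a b))

section

variable {Q : Type u} [LinearOrder Q]

open OrderDual
open scoped Interval

/-- The union of blocks ordered like `ι` is their lexicographic sum;
`#ι < succ #Q` says `#ι ≤ #Q`. -/
def IsWellOrderedSumClosed (K : Set Q → Prop) : Prop :=
  ∀ (ι : Type u) (_ : LinearOrder ι), WellFoundedLT ι → #ι < Order.succ #Q →
    ∀ A : ι → Set Q, (∀ i j : ι, i < j → ∀ x ∈ A i, ∀ y ∈ A j, x < y) →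
      (∀ i, K (A i)) → K (⋃ i, A i)

def IsReverseWellOrderedSumClosed (K : Set Q → Prop) : Prop :=
  ∀ (ι : Type u) (_ : LinearOrder ι), WellFoundedGT ι → #ι < Order.succ #Q →
    ∀ A : ι → Set Q, (∀ i j : ι, i < j → ∀ x ∈ A i, ∀ y ∈ A j, x < y) →
      (∀ i, K (A i)) → K (⋃ i, A i)

variable {K : Set Q → Prop}

theorem IsWellOrderedSumClosed.union (hsum : IsWellOrderedSumClosed K) {A B : Set Q}
    (hA : K A) (hB : K B) (hAB : ∀ x ∈ A, ∀ y ∈ B, x < y) : K (A ∪ B) := by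
  rcases A.eq_empty_or_nonempty with rfl | ⟨a, ha⟩
  · rwa [empty_union]
  rcases B.eq_empty_or_nonempty with rfl | ⟨b, hb⟩
  · rwa [union_empty]
  have hcard : #(ULift.{u} Bool) < Order.succ #Q := by
    simpa [Order.lt_succ_iff] using two_le_iff.mpr ⟨a, b, (hAB a ha b hb).ne⟩
  have hunion : A ∪ B = ⋃ i : ULift.{u} Bool, cond i.down B A := by
    rw [union_comm, union_eq_iUnion]
    exact (Equiv.ulift.surjective.iUnion_comp fun b => cond b B A).symm
  rw [hunion]
  refine hsum _ inferInstance inferInstance hcard _ ?_ fun i => ?_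
  · rintro ⟨_ | _⟩ ⟨_ | _⟩ hij <;> first | exact absurd hij (by decide) | exact hAB
  · cases i.down <;> assumption

/-- Along a well-ordering `f` of `C`, the blocks `{x ∈ C | x ≤ f i, f j < x for j < i}`
partition `C`. -/
theorem IsWellOrderedSumClosed.of_forall_inter_Iic (hsub : Antitone K)
    (hsum : IsWellOrderedSumClosed K) {C : Set Q} (hC : ∀ b ∈ C, K (C ∩ Iic b)) : K C := by
  obtain ⟨f⟩ : Nonempty ((#C).ord.ToType ≃ C) := Cardinal.eq.mp (mk_ord_toType _)
  let A : (#C).ord.ToType → Set Q := fun i => {x ∈ C | x ≤ f i ∧ ∀ j < i, (f j : Q) < x}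
  have hcover : C = ⋃ i, A i := by
    refine Subset.antisymm (fun x hx => ?_) (iUnion_subset fun i x hx => hx.1)
    obtain ⟨i, hi, hmin⟩ := wellFounded_lt.has_min {i | x ≤ f i} ⟨f.symm ⟨x, hx⟩, by simp⟩
    exact mem_iUnion.mpr ⟨i, hx, hi, fun j hj => not_le.mp fun h => hmin j h hj⟩
  rw [hcover]
  refine hsum _ inferInstance inferInstance ?_ A ?_ fun i => ?_
  · exact Order.lt_succ_iff.mpr ((mk_ord_toType _).trans_le (mk_subtype_le _))
  · exact fun i j hij x hx y hy => hx.2.1.trans_lt (hy.2.2 i hij)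
  · exact hsub (show A i ⊆ C ∩ Iic (f i) from fun x hx => ⟨hx.1, hx.2.1⟩) (hC _ (f i).2)

theorem IsReverseWellOrderedSumClosed.dual (hsum : IsReverseWellOrderedSumClosed K) :
    IsWellOrderedSumClosed fun S : Set Qᵒᵈ => K (toDual ⁻¹' S) := by
  intro ι _ _ hcard A hA hK
  rw [preimage_iUnion]
  exact hsum ιᵒᵈ inferInstance inferInstance hcard (fun i => toDual ⁻¹' A (ofDual i))
    (fun i j hij x hx y hy => hA _ _ hij _ hy _ hx) fun i => hK _

theorem IsReverseWellOrderedSumClosed.of_forall_inter_Ici (hsub : Antitone K)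
    (hsum : IsReverseWellOrderedSumClosed K) {C : Set Q} (hC : ∀ b ∈ C, K (C ∩ Ici b)) :
    K C :=
  hsum.dual.of_forall_inter_Iic (C := ofDual ⁻¹' C)
    (fun _ _ h => hsub (preimage_mono h)) fun b hb => hC (ofDual b) hb

theorem intervalEquiv_iff_uIcc {a b : Q} : IntervalEquiv K a b ↔ K [[a, b]] :=
  Iff.rfl

theorem IntervalEquiv.refl (hsingleton : ∀ a : Q, K {a}) (a : Q) : IntervalEquiv K a a := by
  rw [intervalEquiv_iff_uIcc, uIcc_self]
  exact hsingleton a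

theorem IntervalEquiv.symm {a b : Q} (h : IntervalEquiv K a b) : IntervalEquiv K b a := by
  rwa [intervalEquiv_iff_uIcc, uIcc_comm]

theorem IntervalEquiv.of_uIcc_subset (hsub : Antitone K) {a b c d : Q} (h : IntervalEquiv K a b)
    (hcd : [[c, d]] ⊆ [[a, b]]) : IntervalEquiv K c d :=
  hsub hcd h

theorem IntervalEquiv.trans (hsub : Antitone K) (hsum : IsWellOrderedSumClosed K) {a b c : Q}
    (hab : IntervalEquiv K a b) (hbc : IntervalEquiv K b c) : IntervalEquiv K a c := by
  wlog hac : a ≤ c generalizing a c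
  · exact (this hbc.symm hab.symm (le_of_not_ge hac)).symm
  rcases le_total b a with hba | hab'
  · exact hbc.of_uIcc_subset hsub (uIcc_subset_uIcc_right (mem_uIcc_of_le hba hac))
  rcases le_total c b with hcb | hbc'
  · exact hab.of_uIcc_subset hsub (uIcc_subset_uIcc_left (mem_uIcc_of_le hac hcb))
  rw [intervalEquiv_iff_uIcc, uIcc_of_le hac, ← Icc_union_Ioc_eq_Icc hab' hbc']
  rw [intervalEquiv_iff_uIcc, uIcc_of_le hab'] at hab
  rw [intervalEquiv_iff_uIcc, uIcc_of_le hbc'] at hbc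
  exact hsum.union hab (hsub Ioc_subset_Icc_self hbc) fun x hx y hy => hx.2.trans_lt hy.1

theorem intervalEquiv_equivalence (hsingleton : ∀ a : Q, K {a}) (hsub : Antitone K)
    (hsum : IsWellOrderedSumClosed K) : Equivalence (IntervalEquiv K) :=
  ⟨IntervalEquiv.refl hsingleton, IntervalEquiv.symm, fun hab hbc => hab.trans hsub hsum hbc⟩

theorem IsWellOrderedSumClosed.setOf_intervalEquiv (hsum : IsWellOrderedSumClosed K)
    (hsum' : IsReverseWellOrderedSumClosed K) (hsub : Antitone K) (a : Q) :
    K {b | IntervalEquiv K a b} := by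
  set C := {b | IntervalEquiv K a b}
  have hbelow : K (C ∩ Iio a) := hsum'.of_forall_inter_Ici hsub fun b hb =>
    hsub (show C ∩ Iio a ∩ Ici b ⊆ [[a, b]] from
      fun x hx => Icc_subset_uIcc' ⟨hx.2, hx.1.2.le⟩) hb.1
  have habove : K (C ∩ Ici a) := hsum.of_forall_inter_Iic hsub fun b hb =>
    hsub (show C ∩ Ici a ∩ Iic b ⊆ [[a, b]] from
      fun x hx => Icc_subset_uIcc ⟨hx.1.2, hx.2⟩) hb.1
  rw [← inter_univ C, ← Iio_union_Ici (a := a), inter_union_distrib_left]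
  exact hsum.union hbelow habove fun x hx y hy => hx.2.trans_le hy.2

theorem IntervalEquiv.lt_of_not_intervalEquiv (hsub : Antitone K)
    (hsum : IsWellOrderedSumClosed K) {a b c d : Q} (hab : a < b)
    (hnab : ¬ IntervalEquiv K a b) (hac : IntervalEquiv K a c) (hbd : IntervalEquiv K b d) :
    c < d := by
  by_contra! hdc
  apply hnab
  rcases le_total b c with hbc | hcb
  · exact hac.of_uIcc_subset hsub (uIcc_subset_uIcc_left (mem_uIcc_of_le hab.le hbc))
  · exact hac.trans hsub hsum
      (hbd.symm.of_uIcc_subset hsub (uIcc_subset_uIcc_right (mem_uIcc_of_le hdc hcb)))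

end

theorem stmt_15_general {Q : Type u} [LinearOrder Q] (κ : Cardinal.{u}) (hκ : ℵ₀ ≤ κ)
    (K : Set Q → Prop)
    (hsmall : ∀ A : Set Q, #A < κ → K A)
    (hsub : ∀ A B : Set Q, A ⊆ B → K B → K A)
    (hsum : ∀ (ι : Type u) (_ : LinearOrder ι), WellFoundedLT ι → #ι < Order.succ #Q →
      ∀ A : ι → Set Q, (∀ i j : ι, i < j → ∀ x ∈ A i, ∀ y ∈ A j, x < y) →
        (∀ i, K (A i)) → K (⋃ i, A i))
    (hsum' : ∀ (ι : Type u) (_ : LinearOrder ι), WellFoundedGT ι → #ι < Order.succ #Q →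
      ∀ A : ι → Set Q, (∀ i j : ι, i < j → ∀ x ∈ A i, ∀ y ∈ A j, x < y) →
        (∀ i, K (A i)) → K (⋃ i, A i)) :
    Equivalence (IntervalEquiv K) ∧
    (∀ a : Q, K {b : Q | IntervalEquiv K a b}) ∧
    (∀ a b c d : Q, a < b → ¬ IntervalEquiv K a b →
      IntervalEquiv K a c → IntervalEquiv K b d → c < d) := by
  have hsingleton : ∀ a : Q, K {a} := fun a =>
    hsmall _ (by simpa using one_lt_aleph0.trans_le hκ)
  exact ⟨intervalEquiv_equivalence hsingleton hsub hsum,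
    IsWellOrderedSumClosed.setOf_intervalEquiv hsum hsum' hsub,
    fun _ _ _ _ => IntervalEquiv.lt_of_not_intervalEquiv hsub hsum⟩

/-- Given a class K of suborders of a linear order Q that contains all orders of
size < κ and is closed under isomorphism, suborders, and lexicographic sums along
well-orders of length < |Q|⁺ and their inverses, the relation `IntervalEquiv K` is
an equivalence relation, each of its classes lies in K, and for `a < b`
inequivalent, the whole class of `a` lies below the whole class of `b`. -/
theorem stmt_15 {Q : Type u} [LinearOrder Q] (κ : Cardinal.{u}) (hκ : ℵ₀ ≤ κ)
    (K : Set Q → Prop)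
    (hiso : ∀ A B : Set Q, Nonempty (↥A ≃o ↥B) → K A → K B)
    (hsmall : ∀ A : Set Q, #A < κ → K A)
    (hsub : ∀ A B : Set Q, A ⊆ B → K B → K A)
    (hsum : ∀ (ι : Type u) (_ : LinearOrder ι), WellFoundedLT ι → #ι < Order.succ #Q →
      ∀ A : ι → Set Q, (∀ i j : ι, i < j → ∀ x ∈ A i, ∀ y ∈ A j, x < y) →
        (∀ i, K (A i)) → K (⋃ i, A i))
    (hsum' : ∀ (ι : Type u) (_ : LinearOrder ι), WellFoundedGT ι → #ι < Order.succ #Q →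
      ∀ A : ι → Set Q, (∀ i j : ι, i < j → ∀ x ∈ A i, ∀ y ∈ A j, x < y) →
        (∀ i, K (A i)) → K (⋃ i, A i)) :
    Equivalence (IntervalEquiv K) ∧
    (∀ a : Q, K {b : Q | IntervalEquiv K a b}) ∧
    (∀ a b c d : Q, a < b → ¬ IntervalEquiv K a b →
      IntervalEquiv K a c → IntervalEquiv K b d → c < d) :=
  stmt_15_general κ hκ K hsmall hsub hsum hsum'
end

section
/- Let L₀ be the lexicographic sum along ω* (the inverse of ω) of copies of the ordinal κ, where κ is a regular uncountable cardinal. Then L₀ is not weakly κ-dense and has no strictly decreasing sequence of length κ. -/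
open Cardinal Set

universe u

/-! Two successive elements of a copy of `κ` bound an empty interval. A strictly decreasing
map from a well-order into `ι ×ₗ β`, with `β` well-founded, is strictly decreasing in the second
coordinate on each fibre of the first, so each fibre is well-founded in both directions, hence
finite; with `ι` countable the domain is countable, so it cannot have size `κ > ℵ₀`. -/

theorem not_weaklyDense_of_covBy {κ : Cardinal.{u}} {P : Type u} [Preorder P] (hκ : κ ≠ 0)
    {a b : P} (hab : a ⋖ b) : ¬ WeaklyDense κ P := by
  rintro ⟨-, hdense⟩
  have hle := hdense a b hab.lt
  rw [show {x | a < x ∧ x < b} = Ioo a b from rfl, hab.Ioo_eq, mk_eq_zero] at hle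
  exact hκ (nonpos_iff_eq_zero.1 hle)

theorem exists_covBy_of_nontrivial (α : Type*) [LinearOrder α] [WellFoundedLT α] [Nontrivial α] :
    ∃ a b : α, a ⋖ b := by
  obtain ⟨a, b, hab⟩ := exists_pair_lt α
  obtain ⟨c, hc⟩ := exists_covBy_of_wellFoundedLT (not_isMax_iff.2 ⟨b, hab⟩)
  exact ⟨a, c, hc⟩

section StrictAntiLex

variable {α ι β : Type*} [LinearOrder α] [WellFoundedLT α] [Preorder ι] [Preorder β]
  [WellFoundedLT β] {f : α → ι ×ₗ β}

theorem StrictAnti.finite_fiber_fst_ofLex (hf : StrictAnti f) (i : ι) :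
    Finite {a // (ofLex (f a)).1 = i} := by
  have hanti : StrictAnti fun a : {a // (ofLex (f a)).1 = i} ↦ (ofLex (f a)).2 := by
    intro a b hab
    rcases Prod.Lex.lt_iff.1 (hf hab) with hfst | ⟨-, hsnd⟩
    · rw [a.2, b.2] at hfst
      exact absurd hfst (lt_irrefl i)
    · exact hsnd
  have := hanti.wellFoundedGT
  exact Finite.of_wellFoundedLT_wellFoundedGT _

theorem StrictAnti.countable_of_lex [Countable ι] (hf : StrictAnti f) : Countable α :=
  have := hf.finite_fiber_fst_ofLex
  Countable.of_equiv _ (Equiv.sigmaFiberEquiv fun a ↦ (ofLex (f a)).1)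

end StrictAntiLex

theorem stmt_16_general (κ : Cardinal.{0}) (hunc : ℵ₀ < κ) :
    ¬ WeaklyDense κ (ℕᵒᵈ ×ₗ κ.ord.ToType) ∧
    ¬ ∃ f : κ.ord.ToType → ℕᵒᵈ ×ₗ κ.ord.ToType, StrictAnti f := by
  have hcard : #κ.ord.ToType = κ := by rw [mk_toType, card_ord]
  have : Nontrivial κ.ord.ToType := by
    rw [← one_lt_iff_nontrivial, hcard]
    exact one_lt_aleph0.trans hunc
  obtain ⟨a, b, hab⟩ := exists_covBy_of_nontrivial κ.ord.ToType
  refine ⟨not_weaklyDense_of_covBy (aleph0_pos.trans hunc).ne'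
    (Prod.Lex.toLex_covBy_toLex_iff.2 (Or.inl ⟨rfl (a := OrderDual.toDual 0), hab⟩)), ?_⟩
  rintro ⟨f, hf⟩
  have := hf.countable_of_lex
  exact hunc.not_ge (hcard ▸ mk_le_aleph0)

/-- The lexicographic sum along ω* of copies of κ is not weakly κ-dense and has no
strictly decreasing κ-sequence, for κ regular uncountable. -/
theorem stmt_16 (κ : Cardinal.{0}) (hκ : κ.IsRegular) (hunc : ℵ₀ < κ) :
    ¬ WeaklyDense κ (ℕᵒᵈ ×ₗ κ.ord.ToType) ∧
    ¬ ∃ f : κ.ord.ToType → ℕᵒᵈ ×ₗ κ.ord.ToType, StrictAnti f :=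
  stmt_16_general κ hunc
end
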